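/- arXiv:2402.16923 — 2 statements merged into one kernel-verified Lean document; each statement's English description precedes it below -/
import Mathlib

section
/- Let w ≥ 2 and suppose positive integers o₁ < o₂ with o₁ ∤ o₂, and positive s₁, s₂. If both C^{n₁}_{o₁} ⊕ C^{n₂}_{o₂} and C^{m₁}_{o₁} ⊕ C^{m₂}_{o₂} (with n₁,n₂,m₁,m₂ positive) have w-th power equal to C^{s₁}_{o₁} ⊕ C^{s₂}_{o₂} ⊕ (possibly cycles of length lcm(o₁,o₂)), and the number of cycles of length o₁ and o₂ in the power are s₁ and s₂ respectively, then n₁ = m₁ and n₂ = m₂. -/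
/-- Number of cycles of length `q` in `(C^{n₁}_{o₁} ⊕ C^{n₂}_{o₂})^w`, via the binomial
expansion: the term with exponents `(w-k, k)` produces cycles of length `o₁` (if `k = 0`),
`o₂` (if `k = w`), or `lcm(o₁,o₂)` (otherwise). -/
def cnt2 (w o₁ o₂ n₁ n₂ q : ℕ) : ℕ :=
  ∑ k ∈ Finset.range (w + 1),
    if (if k = 0 then o₁ else if k = w then o₂ else Nat.lcm o₁ o₂) = q then
      (if k = 0 then o₁ ^ (w - 1) * n₁ ^ w
       else if k = w then o₂ ^ (w - 1) * n₂ ^ w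
       else w.choose k * (o₁ ^ (w - k - 1) * n₁ ^ (w - k)) *
              (o₂ ^ (k - 1) * n₂ ^ k) * Nat.gcd o₁ o₂)
    else 0

lemma cnt2_o₁ (w o₁ o₂ n₁ n₂ : ℕ) (hw : 1 ≤ w) (ho₁ : 1 ≤ o₁) (hlt : o₁ < o₂) :
    cnt2 w o₁ o₂ n₁ n₂ o₁ = o₁ ^ (w - 1) * n₁ ^ w := by
  unfold cnt2
  rw [Finset.sum_eq_single 0]
  · simp
  · intro k hk hk0
    have hlcm : o₂ ≤ Nat.lcm o₁ o₂ := Nat.le_of_dvd (Nat.lcm_pos (by omega) (by omega))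
      (Nat.dvd_lcm_right _ _)
    simp only [hk0, if_false]
    split
    · simp; omega
    · simp; omega
  · intro h; simp at h

lemma cnt2_o₂ (w o₁ o₂ n₁ n₂ : ℕ) (hw : 1 ≤ w) (ho₁ : 1 ≤ o₁) (hlt : o₁ < o₂)
    (hnd : ¬ o₁ ∣ o₂) :
    cnt2 w o₁ o₂ n₁ n₂ o₂ = o₂ ^ (w - 1) * n₂ ^ w := by
  have hlcm : Nat.lcm o₁ o₂ ≠ o₂ := by
    intro h
    exact hnd (h ▸ Nat.dvd_lcm_left o₁ o₂)
  unfold cnt2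
  rw [Finset.sum_eq_single w]
  · simp [Nat.ne_of_gt (by omega : 0 < w)]
  · intro k hk hkw
    simp only [hkw, if_false]
    split
    · simp; omega
    · simp [hlcm]
  · intro h; simp at h

lemma pow_inj' (a w n m : ℕ) (hw : 1 ≤ w) (hn : 1 ≤ n) (hm : 1 ≤ m)
    (h : a ^ (w - 1) * n ^ w = a ^ (w - 1) * m ^ w) (ha : 1 ≤ a) : n = m := by
  have hp : 0 < a ^ (w - 1) := Nat.pow_pos ha
  have := Nat.eq_of_mul_eq_mul_left hp h
  exact Nat.pow_left_injective (by omega) this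

theorem stmt14 (w o₁ o₂ s₁ s₂ n₁ n₂ m₁ m₂ : ℕ) (hw : 2 ≤ w)
    (ho₁ : 1 ≤ o₁) (hlt : o₁ < o₂) (hnd : ¬ o₁ ∣ o₂)
    (hs₁ : 1 ≤ s₁) (hs₂ : 1 ≤ s₂)
    (hn₁ : 1 ≤ n₁) (hn₂ : 1 ≤ n₂) (hm₁ : 1 ≤ m₁) (hm₂ : 1 ≤ m₂)
    (hn : cnt2 w o₁ o₂ n₁ n₂ o₁ = s₁ ∧ cnt2 w o₁ o₂ n₁ n₂ o₂ = s₂)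
    (hm : cnt2 w o₁ o₂ m₁ m₂ o₁ = s₁ ∧ cnt2 w o₁ o₂ m₁ m₂ o₂ = s₂) :
    n₁ = m₁ ∧ n₂ = m₂ := by
  have hw1 : 1 ≤ w := by omega
  obtain ⟨hn1, hn2⟩ := hn
  obtain ⟨hm1, hm2⟩ := hm
  rw [cnt2_o₁ w o₁ o₂ n₁ n₂ hw1 ho₁ hlt] at hn1
  rw [cnt2_o₁ w o₁ o₂ m₁ m₂ hw1 ho₁ hlt] at hm1
  rw [cnt2_o₂ w o₁ o₂ n₁ n₂ hw1 ho₁ hlt hnd] at hn2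
  rw [cnt2_o₂ w o₁ o₂ m₁ m₂ hw1 ho₁ hlt hnd] at hm2
  exact ⟨pow_inj' o₁ w n₁ m₁ hw1 hn₁ hm₁ (hn1.trans hm1.symm) ho₁,
    pow_inj' o₂ w n₂ m₂ hw1 hn₂ hm₂ (hn2.trans hm2.symm) (by omega)⟩
end

section
/- Let w ≥ 2 and o₁ | o₂, o₁ < o₂, with positive integers s₁, s₂. A solution (n₁, n₂) in positive integers to the system o₁^(w-1)n₁^w = s₁ and (o₁n₁ + o₂n₂)^w = o₂s₂ + o₁s₁ exists if and only if s₁/o₁^(w-1) is a perfect w-th power (say with w-th root giving n₁) and (o₂s₂ + o₁s₁) is a perfect w-th power whose w-th root exceeds o₁n₁ and is congruent to o₁n₁ modulo o₂. -/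
theorem stmt17 (w o₁ o₂ s₁ s₂ : ℕ) (hw : 2 ≤ w)
    (ho₁ : 1 ≤ o₁) (hlt : o₁ < o₂) (hdvd : o₁ ∣ o₂) (hs₁ : 1 ≤ s₁) (hs₂ : 1 ≤ s₂) :
    (∃ n₁ n₂ : ℕ, 1 ≤ n₁ ∧ 1 ≤ n₂ ∧ o₁ ^ (w - 1) * n₁ ^ w = s₁ ∧
        (o₁ * n₁ + o₂ * n₂) ^ w = o₂ * s₂ + o₁ * s₁) ↔
    (∃ a : ℕ, o₁ ^ (w - 1) * a ^ w = s₁ ∧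
        ∃ r : ℕ, r ^ w = o₂ * s₂ + o₁ * s₁ ∧ o₁ * a < r ∧ r % o₂ = (o₁ * a) % o₂) := by
  constructor
  · rintro ⟨n₁, n₂, hn₁, hn₂, h1, h2⟩
    refine ⟨n₁, h1, o₁ * n₁ + o₂ * n₂, h2, ?_, ?_⟩
    · have : 1 ≤ o₂ * n₂ := Nat.mul_pos (by omega) hn₂
      omega
    · simp [Nat.add_mul_mod_self_left]
  · rintro ⟨a, h1, r, h2, h3, h4⟩
    have ha : 1 ≤ a := by
      rcases Nat.eq_zero_or_pos a with h | h
      · subst h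
        rw [zero_pow (by omega), Nat.mul_zero] at h1
        omega
      · exact h
    have hdvd2 : o₂ ∣ r - o₁ * a := by
      refine ⟨r / o₂ - (o₁ * a) / o₂, ?_⟩
      have h5 := Nat.mod_add_div r o₂
      have h6 := Nat.mod_add_div (o₁ * a) o₂
      have hle : (o₁ * a) / o₂ ≤ r / o₂ := Nat.div_le_div_right h3.le
      rw [Nat.mul_sub]
      omega
    obtain ⟨k, hk⟩ := hdvd2
    have hk1 : 1 ≤ k := by
      rcases Nat.eq_zero_or_pos k with h | h
      · subst h; omega
      · exact h
    refine ⟨a, k, ha, hk1, h1, ?_⟩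
    have : o₁ * a + o₂ * k = r := by omega
    rw [this]; exact h2
end
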